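/- For every n ≥ 4, in the target group G_D(n), define e_{ij} := (i j)·t_{ij} for each pair of distinct indices i, j in {1,…,n}, where (i j) denotes the image of the transposition. Then the e_{ij} generate an elementary abelian 2-group: each e_{ij} satisfies e_{ij}² = 1, and e_{ij}·e_{kl} = e_{kl}·e_{ij} for all pairs {i,j} and {k,l} of distinct indices (whether or not the pairs intersect). -/

import Mathlib

open Monoid Pointwise

/-- The type of `k`-element subsets of `Fin n`. -/
abbrev KSub (n k : ℕ) := {s : Finset (Fin n) // s.card = k}

/-- The free product of copies of `ℤ/2ℤ` indexed by the `k`-element subsets of `Fin n`. -/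
abbrev FP (n k : ℕ) := Monoid.CoprodI (fun _ : KSub n k => Multiplicative (ZMod 2))

/-- The symmetric generator `t_S`. -/
def tFP {n k : ℕ} (S : KSub n k) : FP n k :=
  Monoid.CoprodI.of (i := S) (Multiplicative.ofAdd (1 : ZMod 2))

/-- The action of a permutation of `Fin n` on the `k`-element subsets. -/
instance KSub.instMulAction (n k : ℕ) : MulAction (Equiv.Perm (Fin n)) (KSub n k) where
  smul σ S := ⟨σ • S.1, by rw [Finset.card_smul_finset]; exact S.2⟩
  one_smul S := Subtype.ext (one_smul _ S.1)
  mul_smul σ τ S := Subtype.ext (mul_smul σ τ S.1)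

/-- The endomorphism of the free product induced by a permutation of `Fin n`. -/
def fpHom {n k : ℕ} (σ : Equiv.Perm (Fin n)) : FP n k →* FP n k :=
  Monoid.CoprodI.lift (fun S => Monoid.CoprodI.of (M := fun _ : KSub n k => Multiplicative (ZMod 2)) (i := σ • S))

lemma fpHom_comp {n k : ℕ} (σ τ : Equiv.Perm (Fin n)) :
    (fpHom (n := n) (k := k) σ).comp (fpHom τ) = fpHom (σ * τ) := by
  apply Monoid.CoprodI.ext_hom
  intro S
  ext x
  simp [fpHom, Monoid.CoprodI.lift_of, mul_smul]

lemma fpHom_one {n k : ℕ} : fpHom (n := n) (k := k) 1 = MonoidHom.id _ := by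
  apply Monoid.CoprodI.ext_hom
  intro S
  ext x
  simp [fpHom, Monoid.CoprodI.lift_of]

/-- The action of `Sym(Fin n)` on the free product, permuting the free factors. -/
def fpAut (n k : ℕ) : Equiv.Perm (Fin n) →* MulAut (FP n k) :=
  MonoidHom.mk' (fun σ =>
    { toFun := fpHom σ
      invFun := fpHom σ⁻¹
      left_inv := fun x => by
        have h := fpHom_comp (n := n) (k := k) σ⁻¹ σ
        rw [inv_mul_cancel, fpHom_one] at h
        exact DFunLike.congr_fun h x
      right_inv := fun x => by
        have h := fpHom_comp (n := n) (k := k) σ σ⁻¹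
        rw [mul_inv_cancel, fpHom_one] at h
        exact DFunLike.congr_fun h x
      map_mul' := map_mul _ })
    (fun σ τ => by
      ext x
      exact (DFunLike.congr_fun (fpHom_comp (n := n) (k := k) σ τ) x).symm)

/-- The progenitor `2^{⋆C(n,k)} : Sₙ`. -/
abbrev Progenitor (n k : ℕ) := FP n k ⋊[fpAut n k] Equiv.Perm (Fin n)

/-- The target group: the quotient of the progenitor by the normal closure of the
single relator `(t_{S₀}·σ₀)³`. -/
abbrev TargetGroup (n k : ℕ) (S₀ : KSub n k) (σ₀ : Equiv.Perm (Fin n)) :=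
  Progenitor n k ⧸ Subgroup.normalClosure
    {(SemidirectProduct.inl (tFP S₀) * SemidirectProduct.inr σ₀) ^ 3}

/-- The image in the target group of the symmetric generator `t_S`. -/
def tbar {n k : ℕ} (S₀ : KSub n k) (σ₀ : Equiv.Perm (Fin n)) (S : KSub n k) :
    TargetGroup n k S₀ σ₀ :=
  QuotientGroup.mk (SemidirectProduct.inl (tFP S))

/-- The canonical map from the control group `Sₙ` to the target group. -/
def pbar {n k : ℕ} (S₀ : KSub n k) (σ₀ : Equiv.Perm (Fin n)) :
    Equiv.Perm (Fin n) →* TargetGroup n k S₀ σ₀ :=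
  (QuotientGroup.mk' _).comp (SemidirectProduct.inr)

/-- The subset `{1, 2}` (0-based: `{0, 1}`) of `Fin n`. -/
def S12 (n : ℕ) (hn : 4 ≤ n) : KSub n 2 :=
  ⟨{⟨0, by omega⟩, ⟨1, by omega⟩}, Finset.card_pair (by simp [Fin.ext_iff])⟩

/-- The transposition `(2 3)` (0-based: `(1 2)`) of `Fin n`. -/
def σD (n : ℕ) (hn : 4 ≤ n) : Equiv.Perm (Fin n) :=
  Equiv.swap ⟨1, by omega⟩ ⟨2, by omega⟩

/-- The target group `G_D(n)`, obtained by factoring the progenitor `2^{⋆C(n,2)} : Sₙ`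
by the single relator `(t_{12}·(2 3))³`. -/
abbrev GD (n : ℕ) (hn : 4 ≤ n) := TargetGroup n 2 (S12 n hn) (σD n hn)

/-- The symmetric generator `t_{ij}` of `G_D(n)`. -/
def tD {n : ℕ} (hn : 4 ≤ n) (i j : Fin n) (h : i ≠ j) : GD n hn :=
  tbar (S12 n hn) (σD n hn) ⟨{i, j}, Finset.card_pair h⟩

/-- The canonical map from the control group `Sₙ` to `G_D(n)`. -/
def pD {n : ℕ} (hn : 4 ≤ n) : Equiv.Perm (Fin n) →* GD n hn :=
  pbar (S12 n hn) (σD n hn)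

/-- The element `e_{ij} := (i j)·t_{ij}` of `G_D(n)`. -/
def eD {n : ℕ} (hn : 4 ≤ n) (i j : Fin n) (h : i ≠ j) : GD n hn :=
  pD hn (Equiv.swap i j) * tD hn i j h

/-!
Conjugating the relator `(t₁₂ (2 3))³ = 1` by permutations (`Sₙ` is 3-transitive) gives
`t_{ab} t_{ac} t_{ab} = (b c)` for all distinct `a, b, c`. From this, `e_{ab} e_{ac} = e_{bc}`;
the right side is symmetric in `b, c`, so two `e`'s sharing an index commute, and `e_{ij}`
commutes with `e_{kl}` for `k, l ≠ i` because `e_{kl} = e_{ik} e_{il}`. Finally `(i j)` commutes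
with `t_{ij}`, so `e_{ij}² = (i j)² t_{ij}² = 1`.
-/

open SemidirectProduct

section Progenitor

variable {n k : ℕ}

lemma fpAut_tFP (σ : Equiv.Perm (Fin n)) (S : KSub n k) :
    fpAut n k σ (tFP S) = tFP (σ • S) := by
  simp [fpAut, fpHom, tFP]

lemma tFP_mul_self (S : KSub n k) : tFP S * tFP S = 1 := by
  rw [tFP, ← map_mul, ← ofAdd_add, show (1 + 1 : ZMod 2) = 0 from rfl, ofAdd_zero, map_one]

lemma inr_mul_inl_tFP (σ : Equiv.Perm (Fin n)) (S : KSub n k) :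
    (inr σ : Progenitor n k) * inl (tFP S) = inl (tFP (σ • S)) * inr σ := by
  rw [← fpAut_tFP, inl_aut, mul_assoc _ (inr σ⁻¹), ← map_mul, inv_mul_cancel, map_one, mul_one]

@[simp]
lemma KSub.coe_smul (σ : Equiv.Perm (Fin n)) (S : KSub n k) :
    ((σ • S : KSub n k) : Finset (Fin n)) = σ • (S : Finset (Fin n)) :=
  rfl

lemma KSub.smul_mk_pair (σ : Equiv.Perm (Fin n)) {i j : Fin n} (h : i ≠ j) :
    σ • (⟨{i, j}, Finset.card_pair h⟩ : KSub n 2) =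
      ⟨{σ i, σ j}, Finset.card_pair (σ.injective.ne h)⟩ :=
  Subtype.ext (by simp [Finset.smul_finset_insert, Equiv.Perm.smul_def])

end Progenitor

namespace TargetGroup

variable {n k : ℕ} (S₀ : KSub n k) (σ₀ : Equiv.Perm (Fin n))

lemma tbar_mul_self (S : KSub n k) : tbar S₀ σ₀ S * tbar S₀ σ₀ S = 1 := by
  rw [tbar, ← QuotientGroup.mk_mul, ← map_mul, tFP_mul_self, map_one, QuotientGroup.mk_one]

lemma pbar_mul_tbar (σ : Equiv.Perm (Fin n)) (S : KSub n k) :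
    pbar S₀ σ₀ σ * tbar S₀ σ₀ S = tbar S₀ σ₀ (σ • S) * pbar S₀ σ₀ σ :=
  congrArg QuotientGroup.mk (inr_mul_inl_tFP σ S)

lemma tbar_mul_pbar_pow_three : (tbar S₀ σ₀ S₀ * pbar S₀ σ₀ σ₀) ^ 3 = 1 :=
  (QuotientGroup.eq_one_iff _).mpr (Subgroup.subset_normalClosure rfl)

lemma tbar_smul_mul_pbar_conj_pow_three (σ : Equiv.Perm (Fin n)) :
    (tbar S₀ σ₀ (σ • S₀) * pbar S₀ σ₀ (σ * σ₀ * σ⁻¹)) ^ 3 = 1 := by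
  have hconj : pbar S₀ σ₀ σ * tbar S₀ σ₀ S₀ * (pbar S₀ σ₀ σ)⁻¹ = tbar S₀ σ₀ (σ • S₀) := by
    rw [pbar_mul_tbar, mul_inv_cancel_right]
  rw [← hconj, map_mul, map_mul, map_inv, conj_mul, conj_pow, tbar_mul_pbar_pow_three,
    mul_one, mul_inv_cancel]

end TargetGroup

lemma mul_mul_mul_eq_of_mul_pow_three_eq_one {G : Type*} [Group G] {t t' p : G} (hp : p * p = 1)
    (hconj : p * t = t' * p) (h : (t * p) ^ 3 = 1) : t * t' * t = p := by
  have hinv : p⁻¹ = p := inv_eq_of_mul_eq_one_right hp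
  have ht' : t' = p * t * p := by rw [hconj, mul_assoc, hp, mul_one]
  calc t * t' * t = p⁻¹ :=
        eq_inv_of_mul_eq_one_left (by rw [ht', ← h, pow_three]; simp only [mul_assoc])
    _ = p := hinv

section GD

open Equiv

variable {n : ℕ} (hn : 4 ≤ n)

lemma tD_comm {i j : Fin n} (h : i ≠ j) : tD hn i j h = tD hn j i h.symm := by
  simp only [tD, Finset.pair_comm]

lemma tD_mul_self {i j : Fin n} (h : i ≠ j) : tD hn i j h * tD hn i j h = 1 :=
  TargetGroup.tbar_mul_self _ _ _

lemma pD_mul_tD_of_apply {σ : Perm (Fin n)} {i j i' j' : Fin n} (h : i ≠ j) (h' : i' ≠ j')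
    (hi : σ i = i') (hj : σ j = j') : pD hn σ * tD hn i j h = tD hn i' j' h' * pD hn σ := by
  subst hi hj
  rw [pD, tD, tD, TargetGroup.pbar_mul_tbar, KSub.smul_mk_pair _ h]

lemma pD_swap_mul_self (i j : Fin n) : pD hn (swap i j) * pD hn (swap i j) = 1 := by
  rw [← map_mul, swap_mul_self, map_one]

lemma tD_mul_pD_swap_pow_three {a b c : Fin n} (hab : a ≠ b) (hac : a ≠ c) (hbc : b ≠ c) :
    (tD hn a b hab * pD hn (swap b c)) ^ 3 = 1 := by
  obtain ⟨σ, hσ⟩ := Perm.exists_extending_pair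
    ![(⟨0, by omega⟩ : Fin n), ⟨1, by omega⟩, ⟨2, by omega⟩] ![a, b, c]
    (by intro x y; fin_cases x <;> fin_cases y <;> simp [Fin.ext_iff])
    (by
      intro x y
      fin_cases x <;> fin_cases y <;> simp [hab, hac, hbc, hab.symm, hac.symm, hbc.symm])
  have h0 : σ ⟨0, by omega⟩ = a := hσ 0
  have h1 : σ ⟨1, by omega⟩ = b := hσ 1
  have h2 : σ ⟨2, by omega⟩ = c := hσ 2
  have hS : σ • S12 n hn = ⟨{a, b}, Finset.card_pair hab⟩ := by
    rw [S12, KSub.smul_mk_pair _ (by simp [Fin.ext_iff])]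
    simp only [h0, h1]
  have hσD : σ * σD n hn * σ⁻¹ = swap b c := by
    rw [σD, ← swap_apply_apply, h1, h2]
  have hrel := TargetGroup.tbar_smul_mul_pbar_conj_pow_three (S12 n hn) (σD n hn) σ
  rw [hS, hσD] at hrel
  exact hrel

lemma tD_mul_tD_mul_tD {a b c : Fin n} (hab : a ≠ b) (hac : a ≠ c) (hbc : b ≠ c) :
    tD hn a b hab * tD hn a c hac * tD hn a b hab = pD hn (swap b c) :=
  mul_mul_mul_eq_of_mul_pow_three_eq_one (pD_swap_mul_self hn b c)
    (pD_mul_tD_of_apply hn hab hac (swap_apply_of_ne_of_ne hab hac) (swap_apply_left b c))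
    (tD_mul_pD_swap_pow_three hn hab hac hbc)

lemma eD_comm {i j : Fin n} (h : i ≠ j) : eD hn i j h = eD hn j i h.symm := by
  rw [eD, eD, swap_comm, tD_comm]

lemma eD_mul_self {i j : Fin n} (h : i ≠ j) : eD hn i j h * eD hn i j h = 1 := by
  have hcomm : pD hn (swap i j) * tD hn i j h = tD hn i j h * pD hn (swap i j) := by
    rw [pD_mul_tD_of_apply hn h h.symm (swap_apply_left i j) (swap_apply_right i j), ← tD_comm]
  calc eD hn i j h * eD hn i j h
      = pD hn (swap i j) * (tD hn i j h * pD hn (swap i j)) * tD hn i j h := by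
        rw [eD]; group
    _ = (pD hn (swap i j) * pD hn (swap i j)) * (tD hn i j h * tD hn i j h) := by
        rw [← hcomm]; group
    _ = 1 := by rw [pD_swap_mul_self, tD_mul_self, one_mul]

lemma eD_mul_eD {a b c : Fin n} (hab : a ≠ b) (hac : a ≠ c) (hbc : b ≠ c) :
    eD hn a b hab * eD hn a c hac = eD hn b c hbc := by
  have hmove : tD hn a b hab * pD hn (swap a c) = pD hn (swap a c) * tD hn c b hbc.symm :=
    (pD_mul_tD_of_apply hn hbc.symm hab (swap_apply_right a c)
      (swap_apply_of_ne_of_ne hab.symm hbc)).symm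
  have hrel :
      tD hn c b hbc.symm * tD hn c a hac.symm = pD hn (swap b a) * tD hn c b hbc.symm := by
    rw [← tD_mul_tD_mul_tD hn hbc.symm hac.symm hab.symm, mul_assoc _ (tD hn c b _),
      tD_mul_self, mul_one]
  have hswap : swap a b * swap a c * swap b a = swap b c := by
    have h := swap_apply_apply (swap a b) a c
    rw [swap_apply_left, swap_apply_of_ne_of_ne hac.symm hbc.symm, swap_inv] at h
    rw [swap_comm b a, h]
  calc pD hn (swap a b) * tD hn a b hab * (pD hn (swap a c) * tD hn a c hac)
      = pD hn (swap a b) * (tD hn a b hab * pD hn (swap a c)) * tD hn c a hac.symm := by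
        rw [tD_comm hn hac]; group
    _ = pD hn (swap a b) * pD hn (swap a c) * (tD hn c b hbc.symm * tD hn c a hac.symm) := by
        rw [hmove]; group
    _ = pD hn (swap a b * swap a c * swap b a) * tD hn b c hbc := by
        rw [hrel, map_mul, map_mul, ← tD_comm hn hbc]; group
    _ = pD hn (swap b c) * tD hn b c hbc := by rw [hswap]

lemma commute_eD_eD_of_left_eq (a : Fin n) {b c : Fin n} (hab : a ≠ b) (hac : a ≠ c) :
    Commute (eD hn a b hab) (eD hn a c hac) := by
  obtain rfl | hbc := eq_or_ne b c
  · exact Commute.refl _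
  · rw [Commute, SemiconjBy, eD_mul_eD hn hab hac hbc, eD_mul_eD hn hac hab hbc.symm, eD_comm]

lemma commute_eD {i j k l : Fin n} (hij : i ≠ j) (hkl : k ≠ l) :
    Commute (eD hn i j hij) (eD hn k l hkl) := by
  obtain rfl | hki := eq_or_ne k i
  · exact commute_eD_eD_of_left_eq hn k hij hkl
  obtain rfl | hli := eq_or_ne l i
  · rw [eD_comm hn hkl]
    exact commute_eD_eD_of_left_eq hn l hij hkl.symm
  rw [← eD_mul_eD hn hki.symm hli.symm hkl]
  exact (commute_eD_eD_of_left_eq hn i hij _).mul_right (commute_eD_eD_of_left_eq hn i hij _)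

end GD

/-- For every `n ≥ 4`, the elements `e_{ij} := (i j)·t_{ij}` of `G_D(n)`
generate an elementary abelian 2-group: each satisfies `e_{ij}² = 1` and any two of them
commute (whether or not the index pairs intersect). -/
theorem targetGroup_D_e_elementary_abelian (n : ℕ) (hn : 4 ≤ n) :
    (∀ (i j : Fin n) (h : i ≠ j), eD hn i j h ^ 2 = 1) ∧
      ∀ (i j k l : Fin n) (hij : i ≠ j) (hkl : k ≠ l),
        eD hn i j hij * eD hn k l hkl = eD hn k l hkl * eD hn i j hij :=
  ⟨fun _ _ h => (sq _).trans (eD_mul_self hn h), fun _ _ _ _ hij hkl => commute_eD hn hij hkl⟩
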